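/- Let E be the open unit disc in ℂ and let T be an open subset of the closed unit disc. Then the harmonic measure of T ∩ E relative to E, evaluated at 0, satisfies ω(0, T∩E, E) ≤ (1/2π) ∫₀^{2π} 1_{∂E \ T}(e^{iθ}) dθ, where ω(·, A, E) is defined as the upper semicontinuous regularization of the supremum of all subharmonic functions u on E with u ≤ 1 on E whose upper limits at points of A are ≤ 0. -/

import Mathlib

open Complex MeasureTheory Metric Set Filter Topology
open scoped Manifold

noncomputable section

/-- Circle sub-mean value property + upper semicontinuity on a set `U ⊆ ℂ` (subharmonicity). -/
def SubMeanOn (u : ℂ → ℝ) (U : Set ℂ) : Prop :=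
  UpperSemicontinuousOn u U ∧
  ∀ z ∈ U, ∀ r : ℝ, 0 < r → closedBall z r ⊆ U →
    u z ≤ (1 / (2 * Real.pi)) *
      ∫ θ in (0:ℝ)..(2 * Real.pi), u (z + r * Complex.exp (θ * Complex.I))

/-- Plurisubharmonicity on `D ⊆ E`, via subharmonicity along holomorphic discs. -/
def PSHOn {E : Type*} [NormedAddCommGroup E] [NormedSpace ℂ E]
    (u : E → ℝ) (D : Set E) : Prop :=
  UpperSemicontinuousOn u D ∧
  ∀ φ : ℂ → E, DifferentiableOn ℂ φ (ball 0 1) → MapsTo φ (ball (0:ℂ) 1) D →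
    SubMeanOn (u ∘ φ) (ball 0 1)

/-- Relative extremal function for `A ⊆ closure D`. -/
def pshSup {E : Type*} [NormedAddCommGroup E] [NormedSpace ℂ E]
    (D A : Set E) (z : E) : ℝ :=
  sSup {t : ℝ | ∃ u : E → ℝ, PSHOn u D ∧ (∀ w ∈ D, u w ≤ 1) ∧
    (∀ a ∈ A, (a ∈ D → u a ≤ 0) ∧ (a ∉ D → Filter.limsup u (𝓝[D] a) ≤ 0)) ∧ t = u z}

/-- The plurisubharmonic measure: usc regularization of `pshSup`, extended to `D ∪ A`. -/
def pshm {E : Type*} [NormedAddCommGroup E] [NormedSpace ℂ E]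
    (D A : Set E) (z : E) : ℝ :=
  Filter.limsup (pshSup D A) (𝓝[D] z)

/-- Relative extremal function with subharmonic (1-variable) competitors. -/
def shSup (D A : Set ℂ) (z : ℂ) : ℝ :=
  sSup {t : ℝ | ∃ u : ℂ → ℝ, SubMeanOn u D ∧ (∀ w ∈ D, u w ≤ 1) ∧
    (∀ a ∈ A, (a ∈ D → u a ≤ 0) ∧ (a ∉ D → Filter.limsup u (𝓝[D] a) ≤ 0)) ∧ t = u z}

/-- Harmonic measure of `A` relative to `D ⊆ ℂ`. -/
def hm (D A : Set ℂ) (z : ℂ) : ℝ :=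
  Filter.limsup (shSup D A) (𝓝[D] z)

/-- Plurisubharmonicity on a subset of a complex manifold. -/
def MPSHOn {E : Type*} [NormedAddCommGroup E] [NormedSpace ℂ E]
    {X : Type*} [TopologicalSpace X] [ChartedSpace E X]
    (u : X → ℝ) (D : Set X) : Prop :=
  UpperSemicontinuousOn u D ∧
  ∀ φ : ℂ → X, MDifferentiableOn 𝓘(ℂ, ℂ) 𝓘(ℂ, E) φ (ball 0 1) →
    MapsTo φ (ball (0:ℂ) 1) D → SubMeanOn (u ∘ φ) (ball 0 1)

/-- Relative extremal function on a complex manifold. -/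
def MpshSup {E : Type*} [NormedAddCommGroup E] [NormedSpace ℂ E]
    {X : Type*} [TopologicalSpace X] [ChartedSpace E X]
    (D A : Set X) (z : X) : ℝ :=
  sSup {t : ℝ | ∃ u : X → ℝ, MPSHOn (E := E) u D ∧ (∀ w ∈ D, u w ≤ 1) ∧
    (∀ a ∈ A, (a ∈ D → u a ≤ 0) ∧ (a ∉ D → Filter.limsup u (𝓝[D] a) ≤ 0)) ∧ t = u z}

/-- Plurisubharmonic measure on a complex manifold. -/
def Mpshm {E : Type*} [NormedAddCommGroup E] [NormedSpace ℂ E]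
    {X : Type*} [TopologicalSpace X] [ChartedSpace E X]
    (D A : Set X) (z : X) : ℝ :=
  Filter.limsup (MpshSup (E := E) D A) (𝓝[D] z)

/-- A holomorphic disc on a complex manifold `X`: a holomorphic map defined
(and holomorphic) on a ball of radius `ρ > 1`, i.e. extending past the closed unit disc. -/
def IsHoloDisc {E : Type*} [NormedAddCommGroup E] [NormedSpace ℂ E]
    {X : Type*} [TopologicalSpace X] [ChartedSpace E X]
    (φ : ℂ → X) : Prop :=
  ∃ ρ : ℝ, 1 < ρ ∧ MDifferentiableOn 𝓘(ℂ, ℂ) 𝓘(ℂ, E) φ (ball 0 ρ)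

/-- The Poisson functional of `u`. -/
def poisson {E : Type*} [NormedAddCommGroup E] [NormedSpace ℂ E]
    {X : Type*} [TopologicalSpace X] [ChartedSpace E X]
    (u : X → ℝ) (z : X) : ℝ :=
  sInf {t : ℝ | ∃ φ : ℂ → X, IsHoloDisc (E := E) φ ∧ φ 0 = z ∧
    t = (1 / (2 * Real.pi)) *
      ∫ θ in (0:ℝ)..(2 * Real.pi), u (φ (Complex.exp (θ * Complex.I)))}

/-- A graph-type topological hypersurface in `F × ℂ`. -/
def IsGraph {F : Type*} [NormedAddCommGroup F] [NormedSpace ℂ F]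
    (S : Set (F × ℂ)) : Prop :=
  ∃ (U : Set (F × ℝ)) (h : F × ℝ → ℝ), IsOpen U ∧ ContinuousOn h U ∧
    S = {p : F × ℂ | (p.1, p.2.re) ∈ U ∧ p.2.im = h (p.1, p.2.re)}

/-- A topological hypersurface in a complex manifold modelled on `F × ℂ`. -/
def IsTopHypersurface {F : Type*} [NormedAddCommGroup F] [NormedSpace ℂ F]
    {X : Type*} [TopologicalSpace X] [ChartedSpace (F × ℂ) X]
    (A : Set X) : Prop :=
  ∀ a ∈ A, ∃ φ : PartialHomeomorph X (F × ℂ), a ∈ φ.source ∧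
    IsGraph (φ '' (A ∩ φ.source))

/-- A point `a` is of type 1 with respect to `D`. -/
def IsType1 {X : Type*} [TopologicalSpace X] (D : Set X) (a : X) : Prop :=
  ∀ U ∈ 𝓝 a, ∃ V : Set X, IsOpen V ∧ a ∈ V ∧ V ⊆ U ∧ IsConnected (V ∩ D)


/-!
Every competitor `u` in the definition of `ω(z, T ∩ E, E)` is `≤ 1` on `E` and `≤ 0` on `T ∩ E`.
For `|z| < δ/2`, the circle of radius `1 - δ/2` about `z` stays in `E` and within `δ` of the
unit circle, so the sub-mean value property bounds `u z` by the normalised arc length of the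
points `e^{iθ}` within `δ` of `K = closedBall 0 1 \ T`. Since `K` is closed, these arc lengths
decrease to the arc length of `K`, which is that of `∂E \ T`.
-/

open scoped Real

theorem shSup_nonneg {D A : Set ℂ} {z : ℂ} (hz : z ∈ D) : 0 ≤ shSup D A z := by
  have hlimsup_zero (a : ℂ) : limsup (fun _ : ℂ => (0:ℝ)) (𝓝[D] a) ≤ 0 := by
    rcases (𝓝[D] a).eq_or_neBot with hbot | _
    · simp [hbot, limsup_eq]
    · simp
  refine le_csSup ⟨1, ?_⟩ ⟨fun _ => 0, ⟨upperSemicontinuousOn_const, fun _ _ _ _ _ => by simp⟩,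
    fun _ _ => zero_le_one, fun a _ => ⟨fun _ => le_rfl, fun _ => hlimsup_zero a⟩, rfl⟩
  rintro _ ⟨u, -, hle_one, -, rfl⟩
  exact hle_one z hz

theorem hm_le_of_eventually_shSup_le {D A : Set ℂ} {x : ℂ} (hx : x ∈ closure D) {c : ℝ}
    (h : ∀ᶠ z in 𝓝[D] x, shSup D A z ≤ c) : hm D A x ≤ c := by
  have := mem_closure_iff_nhdsWithin_neBot.1 hx
  refine limsup_le_of_le (IsBoundedUnder.isCoboundedUnder_le ⟨0, ?_⟩) h
  exact eventually_mem_nhdsWithin.mono fun z hz => shSup_nonneg hz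

theorem norm_ofReal_mul_exp_ofReal_mul_I (r θ : ℝ) : ‖(r : ℂ) * exp (θ * I)‖ = |r| := by
  rw [norm_mul, norm_exp_ofReal_mul_I, norm_real, Real.norm_eq_abs, mul_one]

theorem shSup_le_integral_of_circle {D A : Set ℂ} {z : ℂ} (hz : z ∈ D) {r : ℝ} (hr : 0 < r)
    (hball : closedBall z r ⊆ D) {g : ℝ → ℝ} (hg : IntervalIntegrable g volume 0 (2 * π))
    (hg_nonneg : ∀ θ, 0 ≤ g θ) (hg_one : ∀ θ : ℝ, z + r * exp (θ * I) ∉ A → 1 ≤ g θ) :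
    shSup D A z ≤ (1 / (2 * π)) * ∫ θ in (0:ℝ)..2 * π, g θ := by
  have hbound_nonneg : 0 ≤ (1 / (2 * π)) * ∫ θ in (0:ℝ)..2 * π, g θ :=
    mul_nonneg (by positivity)
      (intervalIntegral.integral_nonneg (by positivity) fun θ _ => hg_nonneg θ)
  refine Real.sSup_le ?_ hbound_nonneg
  rintro _ ⟨u, ⟨-, hmean⟩, hle_one, hA, rfl⟩
  have hcircle : ∀ θ : ℝ, z + r * exp (θ * I) ∈ D := fun θ =>
    hball (by rw [mem_closedBall_iff_norm, add_sub_cancel_left, norm_ofReal_mul_exp_ofReal_mul_I,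
      abs_of_pos hr])
  have hu_le : ∀ θ : ℝ, u (z + r * exp (θ * I)) ≤ g θ := by
    intro θ
    by_cases hθ : z + r * exp (θ * I) ∈ A
    · exact ((hA _ hθ).1 (hcircle θ)).trans (hg_nonneg θ)
    · exact (hle_one _ (hcircle θ)).trans (hg_one θ hθ)
  have hmean_z := hmean z hz r hr hball
  by_cases hint : IntervalIntegrable (fun θ : ℝ => u (z + r * exp (θ * I))) volume 0 (2 * π)
  · exact hmean_z.trans <| mul_le_mul_of_nonneg_left
      (intervalIntegral.integral_mono_on (by positivity) hint hg fun θ _ => hu_le θ)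
      (by positivity)
  · -- the junk value `0` of the integral turns the sub-mean inequality into `u z ≤ 0`
    rw [intervalIntegral.integral_undef hint, mul_zero] at hmean_z
    exact hmean_z.trans hbound_nonneg

def circleArcMeasure : Measure ℂ :=
  (volume.restrict (Ioc 0 (2 * π))).map fun θ : ℝ => exp (θ * I)

instance : IsFiniteMeasure circleArcMeasure := by
  unfold circleArcMeasure
  infer_instance

theorem measurable_exp_ofReal_mul_I : Measurable fun θ : ℝ => exp (θ * I) :=
  (continuous_ofReal.mul continuous_const).cexp.measurable

theorem integral_indicator_exp_ofReal_mul_I {S : Set ℂ} (hS : MeasurableSet S) :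
    ∫ θ in (0:ℝ)..2 * π, S.indicator (fun _ => (1:ℝ)) (exp (θ * I)) =
      circleArcMeasure.real S := by
  rw [intervalIntegral.integral_of_le (by positivity), circleArcMeasure,
    ← integral_map measurable_exp_ofReal_mul_I.aemeasurable
      (aestronglyMeasurable_const.indicator hS)]
  exact integral_indicator_one hS

theorem tendsto_circleArcMeasure_real_cthickening {K : Set ℂ} (hK : IsClosed K) :
    Tendsto (fun δ => circleArcMeasure.real (cthickening δ K)) (𝓝 0)
      (𝓝 (circleArcMeasure.real K)) :=
  (ENNReal.tendsto_toReal (measure_ne_top _ _)).comp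
    (tendsto_measure_cthickening_of_isClosed ⟨1, one_pos, measure_ne_top _ _⟩ hK)

theorem shSup_unitDisc_le_circleArcMeasure_cthickening (T : Set ℂ) {δ : ℝ} (hδ : δ < 2)
    {z : ℂ} (hz : ‖z‖ < δ / 2) :
    shSup (ball 0 1) (T ∩ ball 0 1) z ≤
      (1 / (2 * π)) * circleArcMeasure.real (cthickening δ (closedBall 0 1 \ T)) := by
  set S := cthickening δ (closedBall (0:ℂ) 1 \ T)
  have hS : MeasurableSet S := isClosed_cthickening.measurableSet
  rw [← integral_indicator_exp_ofReal_mul_I hS]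
  have hball : closedBall z (1 - δ / 2) ⊆ ball 0 1 := fun w hw => by
    rw [mem_ball_zero_iff]
    calc ‖w‖ ≤ ‖w - z‖ + ‖z‖ := norm_le_norm_sub_add w z
      _ < (1 - δ / 2) + δ / 2 := add_lt_add_of_le_of_lt (mem_closedBall_iff_norm.1 hw) hz
      _ = 1 := by ring
  refine shSup_le_integral_of_circle (hball (mem_closedBall_self (by linarith))) (by linarith)
    hball ?_ (fun θ => indicator_nonneg (fun _ _ => zero_le_one) _) fun θ hθ => ?_
  · rw [intervalIntegrable_iff, uIoc_of_le (by positivity)]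
    exact (integrableOn_const measure_Ioc_lt_top.ne).indicator
      (hS.preimage measurable_exp_ofReal_mul_I)
  · have hδ_pos : 0 < δ := by linarith [norm_nonneg z]
    set w := z + ((1 - δ / 2 : ℝ) : ℂ) * exp (θ * I)
    have hw : w ∈ ball (0:ℂ) 1 :=
      hball (by rw [mem_closedBall_iff_norm, add_sub_cancel_left, norm_ofReal_mul_exp_ofReal_mul_I,
        abs_of_pos (by linarith)])
    have hdist : dist (exp (θ * I)) w ≤ δ :=
      calc dist (exp (θ * I)) w = ‖((δ / 2 : ℝ) : ℂ) * exp (θ * I) - z‖ := by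
            rw [dist_eq_norm]; congr 1; simp only [w]; push_cast; ring
        _ ≤ ‖((δ / 2 : ℝ) : ℂ) * exp (θ * I)‖ + ‖z‖ := norm_sub_le _ _
        _ ≤ δ / 2 + δ / 2 := by
            rw [norm_ofReal_mul_exp_ofReal_mul_I, abs_of_pos (by linarith)]
            linarith
        _ = δ := by ring
    have hwK : w ∈ closedBall (0:ℂ) 1 \ T :=
      ⟨ball_subset_closedBall hw, fun hwT => hθ ⟨hwT, hw⟩⟩
    rw [indicator_of_mem (mem_cthickening_of_dist_le _ w δ _ hwK hdist)]

/-- Lemma: `ω(0, T ∩ E, E) ≤ (1/2π) ∫₀^{2π} 1_{∂E \ T}(e^{iθ}) dθ`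
for any open subset `T` of the closed unit disc. -/
theorem stmt0 (T : Set ℂ)
    (hT : ∃ U : Set ℂ, IsOpen U ∧ T = U ∩ closedBall (0:ℂ) 1) :
    hm (ball (0:ℂ) 1) (T ∩ ball (0:ℂ) 1) 0 ≤
      (1 / (2 * Real.pi)) * ∫ θ in (0:ℝ)..(2 * Real.pi),
        Set.indicator (sphere (0:ℂ) 1 \ T) (fun _ => (1:ℝ))
          (Complex.exp (θ * Complex.I)) := by
  obtain ⟨U, hU, rfl⟩ := hT
  set K := closedBall (0:ℂ) 1 \ (U ∩ closedBall 0 1)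
  have hK : IsClosed K := by
    simp only [K, sdiff_inter_self_eq_sdiff]
    exact isClosed_closedBall.sdiff hU
  have hbound : ∀ᶠ δ in 𝓝[>] 0, hm (ball 0 1) (U ∩ closedBall 0 1 ∩ ball 0 1) 0 ≤
      (1 / (2 * π)) * circleArcMeasure.real (cthickening δ K) := by
    filter_upwards [Ioo_mem_nhdsGT two_pos] with δ hδ
    refine hm_le_of_eventually_shSup_le (subset_closure (mem_ball_self one_pos)) ?_
    filter_upwards [nhdsWithin_le_nhds (ball_mem_nhds 0 (half_pos hδ.1))] with z hz
    exact shSup_unitDisc_le_circleArcMeasure_cthickening _ hδ.2 (mem_ball_zero_iff.1 hz)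
  have hlim := ((tendsto_circleArcMeasure_real_cthickening hK).mono_left
    (nhdsWithin_le_nhds (s := Ioi 0))).const_mul (1 / (2 * π))
  calc _ ≤ (1 / (2 * π)) * circleArcMeasure.real K := ge_of_tendsto hlim hbound
    _ = _ := by
      rw [← integral_indicator_exp_ofReal_mul_I hK.measurableSet]
      congr 1
      refine intervalIntegral.integral_congr fun θ _ => ?_
      have hθ : exp (θ * I) ∈ sphere (0:ℂ) 1 := by simp [norm_exp_ofReal_mul_I]
      have hmem : exp (θ * I) ∈ K ↔ exp (θ * I) ∈ sphere 0 1 \ (U ∩ closedBall 0 1) :=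
        ⟨fun h => ⟨hθ, h.2⟩, fun h => ⟨sphere_subset_closedBall hθ, h.2⟩⟩
      by_cases h : exp (θ * I) ∈ K
      · rw [indicator_of_mem h, indicator_of_mem (hmem.1 h)]
      · rw [indicator_of_notMem h, indicator_of_notMem (mt hmem.2 h)]
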